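/- Let 𝒟 be a probability distribution over (x,y) ∈ ℝ^d × {0,1} with E[x_l²] ≤ B_X² for all coordinates l. Let S_1, …, S_k ⊆ {1,…,d} with ∪_{i=1}^k S_i = {1,…,d}, and let p_1, …, p_k be produced by the sequential logit-passing protocol, each agent's minimizer assumed to exist. Let g = σ∘z_g be any logistic predictor with z_g(x) = Σ_{l=1}^d α_l x_l and Σ_{l=1}^d |α_l| ≤ B_g, and let ε ≥ L(p_1) − L(p_k). Then L(p_k) ≤ L(g) + B_g · B_X · √(kε/2), where L denotes expected BCE loss. -/

import Mathlib

open MeasureTheory ProbabilityTheory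

/-- The sigmoid (logistic) function `σ(z) = 1 / (1 + e^{-z})`. -/
noncomputable def sigmoid (z : ℝ) : ℝ := 1 / (1 + Real.exp (-z))

/-- The expected BCE loss `L(σ∘z) = E[log(1+e^{z(x)}) − y·z(x)]` of a logit function `z`. -/
noncomputable def bceLossFn {d : ℕ} (μ : Measure ((Fin d → ℝ) × ℝ))
    (z : (Fin d → ℝ) → ℝ) : ℝ :=
  ∫ q, (Real.log (1 + Real.exp (z q.1)) - q.2 * z q.1) ∂μ

/-- The logits of the sequential logit-passing protocol: `z_0 ≡ 0` and
`z_{i+1}(x) = w_iᵀ x + v_i z_i(x)`. -/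
noncomputable def seqLogit {d : ℕ} (w : ℕ → Fin d → ℝ) (v : ℕ → ℝ) :
    ℕ → (Fin d → ℝ) → ℝ
  | 0 => fun _ => 0
  | (i + 1) => fun x => (∑ l, w i l * x l) + v i * seqLogit w v i x

/-!
With `softplus z = log (1 + eᶻ)` we have `L(z) = E[softplus z - y z]`, and `softplus' = σ` is
`1/4`-Lipschitz. Agent `i` minimises `L` over a linear space of logits containing `z_i`,
`z_{i+1}` and every `x_l` with `l ∈ S_i`, so by first-order optimality the gradient
`E[(σ(z_{i+1}) - y) u]` vanishes in all these directions `u`. Co-coercivity of `softplus` turns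
this into `E[(σ(z_i) - σ(z_{i+1}))²] ≤ (L_i - L_{i+1}) / 2`. For a feature `l ∈ S_i`, the
gradient component `E[(σ(z_j) - y) x_l]` is `0` at `j = i + 1` and then moves, by
Cauchy–Schwarz, by at most `B_X √((L_j - L_{j+1}) / 2)` per step; these steps sum to at most
`B_X √(kε/2)`. Convexity of `softplus` finally bounds `L(z_k) - L(g)` by
`E[(σ(z_k) - y)(z_k - z_g)] = -Σ_l α_l E[(σ(z_k) - y) x_l]`.
-/

open Finset

noncomputable def softplus (z : ℝ) : ℝ := Real.log (1 + Real.exp z)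

lemma sigmoid_eq_real_sigmoid : sigmoid = Real.sigmoid := funext fun _ => one_div _

lemma hasDerivAt_softplus (z : ℝ) : HasDerivAt softplus (sigmoid z) z := by
  refine (((Real.hasDerivAt_exp z).const_add 1).log (by positivity)).congr_deriv ?_
  unfold sigmoid
  rw [Real.exp_neg]
  field_simp
  ring

lemma continuous_softplus : Continuous softplus :=
  continuous_iff_continuousAt.2 fun z => (hasDerivAt_softplus z).continuousAt

lemma softplus_nonneg (z : ℝ) : 0 ≤ softplus z :=
  Real.log_nonneg (by linarith [Real.exp_pos z])

lemma softplus_zero : softplus 0 = Real.log 2 := by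
  norm_num [softplus]

lemma add_mul_sub_le_of_hasDerivAt_of_monotone {f f' : ℝ → ℝ}
    (hf : ∀ x, HasDerivAt f (f' x) x) (hf' : Monotone f') (a b : ℝ) :
    f a + f' a * (b - a) ≤ f b := by
  have hfc : Continuous f := continuous_iff_continuousAt.2 fun x => (hf x).continuousAt
  rcases lt_trichotomy a b with hab | rfl | hba
  · obtain ⟨c, hc, hslope⟩ := exists_hasDerivAt_eq_slope f f' hab hfc.continuousOn
      fun x _ => hf x
    rw [eq_div_iff (sub_pos.2 hab).ne'] at hslope
    nlinarith [hf' hc.1.le]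
  · simp
  · obtain ⟨c, hc, hslope⟩ := exists_hasDerivAt_eq_slope f f' hba hfc.continuousOn
      fun x _ => hf x
    rw [eq_div_iff (sub_pos.2 hba).ne'] at hslope
    nlinarith [hf' hc.2.le]

lemma softplus_add_sigmoid_mul_sub_le (a b : ℝ) :
    softplus a + sigmoid a * (b - a) ≤ softplus b :=
  add_mul_sub_le_of_hasDerivAt_of_monotone hasDerivAt_softplus
    (sigmoid_eq_real_sigmoid ▸ Real.sigmoid_monotone) a b

lemma monotone_div_four_sub_sigmoid : Monotone fun t => t / 4 - sigmoid t := by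
  rw [sigmoid_eq_real_sigmoid]
  refine monotone_of_hasDerivAt_nonneg
    (fun t => ((hasDerivAt_id t).div_const 4).sub (Real.hasDerivAt_sigmoid t)) fun t => ?_
  simp only [Pi.zero_apply]
  nlinarith [sq_nonneg (Real.sigmoid t - 1 / 2)]

lemma softplus_le_add_sigmoid_mul_sub_add_sq (a b : ℝ) :
    softplus b ≤ softplus a + sigmoid a * (b - a) + (b - a) ^ 2 / 8 := by
  have h := add_mul_sub_le_of_hasDerivAt_of_monotone (f := fun t => t ^ 2 / 8 - softplus t)
    (fun t => (((hasDerivAt_pow 2 t).div_const 8).fun_sub (hasDerivAt_softplus t)).congr_deriv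
      (by norm_num; ring))
    monotone_div_four_sub_sigmoid a b
  nlinarith [h]

lemma two_mul_sigmoid_sub_sq_le (a b : ℝ) :
    2 * (sigmoid a - sigmoid b) ^ 2 ≤ softplus a - softplus b - sigmoid b * (a - b) := by
  -- the upper bound at `a` and the tangent at `b`, taken where their gap is smallest
  have hup := softplus_le_add_sigmoid_mul_sub_add_sq a (a - 4 * (sigmoid a - sigmoid b))
  have hlow := softplus_add_sigmoid_mul_sub_le b (a - 4 * (sigmoid a - sigmoid b))
  nlinarith [hup, hlow]

lemma abs_softplus_le (z : ℝ) : |softplus z| ≤ |z| + Real.log 2 := by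
  have h := softplus_add_sigmoid_mul_sub_le z 0
  have hσ : sigmoid z * z ≤ |z| := by
    rw [sigmoid_eq_real_sigmoid]
    calc Real.sigmoid z * z ≤ Real.sigmoid z * |z| :=
          mul_le_mul_of_nonneg_left (le_abs_self z) (Real.sigmoid_nonneg z)
      _ ≤ |z| := mul_le_of_le_one_left (abs_nonneg z) (Real.sigmoid_le_one z)
  rw [abs_of_nonneg (softplus_nonneg z)]
  rw [softplus_zero] at h
  linarith

lemma abs_sigmoid_sub_le_one {y : ℝ} (hy : y ∈ Set.Icc (0 : ℝ) 1) (z : ℝ) :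
    |sigmoid z - y| ≤ 1 := by
  rw [sigmoid_eq_real_sigmoid, abs_le]
  constructor <;> linarith [hy.1, hy.2, Real.sigmoid_pos z, Real.sigmoid_lt_one z]

lemma abs_sigmoid_sub_sigmoid_le_one (a b : ℝ) : |sigmoid a - sigmoid b| ≤ 1 :=
  abs_sigmoid_sub_le_one ⟨(sigmoid_eq_real_sigmoid ▸ Real.sigmoid_nonneg b),
    (sigmoid_eq_real_sigmoid ▸ Real.sigmoid_le_one b)⟩ a

lemma abs_integral_mul_le_sqrt_mul_sqrt {α : Type*} [MeasurableSpace α] {μ : Measure α}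
    {f g : α → ℝ} (hf : MemLp f 2 μ) (hg : MemLp g 2 μ) :
    |∫ x, f x * g x ∂μ| ≤ √(∫ x, f x ^ 2 ∂μ) * √(∫ x, g x ^ 2 ∂μ) := by
  have h := integral_mul_le_Lp_mul_Lq_of_nonneg Real.HolderConjugate.two_two
    (ae_of_all μ fun x => abs_nonneg (f x)) (ae_of_all μ fun x => abs_nonneg (g x))
    (by rw [ENNReal.ofReal_ofNat]; exact hf.abs) (by rw [ENNReal.ofReal_ofNat]; exact hg.abs)
  simp only [Real.rpow_two, sq_abs, ← Real.sqrt_eq_rpow] at h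
  calc |∫ x, f x * g x ∂μ| ≤ ∫ x, |f x * g x| ∂μ := abs_integral_le_integral_abs
    _ = ∫ x, |f x| * |g x| ∂μ := by simp_rw [abs_mul]
    _ ≤ _ := h

section Loss

variable {d : ℕ} {μ : Measure ((Fin d → ℝ) × ℝ)} {z z' u u' : (Fin d → ℝ) → ℝ}

/-- The derivative of `t ↦ bceLossFn μ (z + t • u)` at `t = 0`. -/
noncomputable def bceDeriv (μ : Measure ((Fin d → ℝ) × ℝ)) (z u : (Fin d → ℝ) → ℝ) : ℝ :=
  ∫ q, (sigmoid (z q.1) - q.2) * u q.1 ∂μ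

lemma bceLossFn_eq_integral_softplus (μ : Measure ((Fin d → ℝ) × ℝ)) (z : (Fin d → ℝ) → ℝ) :
    bceLossFn μ z = ∫ q, (softplus (z q.1) - q.2 * z q.1) ∂μ :=
  rfl

lemma integrable_sigmoid_sub_mul (hy : ∀ᵐ q ∂μ, q.2 ∈ Set.Icc (0 : ℝ) 1)
    (hz : AEStronglyMeasurable (fun q => z q.1) μ) (hu : Integrable (fun q => u q.1) μ) :
    Integrable (fun q => (sigmoid (z q.1) - q.2) * u q.1) μ :=
  have hσ : Continuous sigmoid := sigmoid_eq_real_sigmoid ▸ continuous_sigmoid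
  hu.bdd_mul ((hσ.comp_aestronglyMeasurable hz).sub measurable_snd.aestronglyMeasurable)
    (hy.mono fun _ hq => abs_sigmoid_sub_le_one hq _)

lemma integrable_softplus_sub_mul [IsFiniteMeasure μ] (hy : ∀ᵐ q ∂μ, q.2 ∈ Set.Icc (0 : ℝ) 1)
    (hz : Integrable (fun q => z q.1) μ) :
    Integrable (fun q => softplus (z q.1) - q.2 * z q.1) μ := by
  refine Integrable.sub' ?_ ?_
  · exact (hz.abs.add (integrable_const _)).mono'
      (continuous_softplus.comp_aestronglyMeasurable hz.1)
      (ae_of_all μ fun _ => abs_softplus_le _)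
  · refine hz.bdd_mul (c := 1) measurable_snd.aestronglyMeasurable (hy.mono fun q hq => ?_)
    rw [Real.norm_eq_abs, abs_le]
    constructor <;> linarith [hq.1, hq.2]

lemma memLp_sigmoid_sub_sigmoid [IsFiniteMeasure μ] (hz : AEStronglyMeasurable (fun q => z q.1) μ)
    (hz' : AEStronglyMeasurable (fun q => z' q.1) μ) :
    MemLp (fun q => sigmoid (z q.1) - sigmoid (z' q.1)) 2 μ :=
  have hσ : Continuous sigmoid := sigmoid_eq_real_sigmoid ▸ continuous_sigmoid
  MemLp.of_bound ((hσ.comp_aestronglyMeasurable hz).sub (hσ.comp_aestronglyMeasurable hz')) 1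
    (ae_of_all μ fun _ => abs_sigmoid_sub_sigmoid_le_one _ _)

lemma bceDeriv_sub (hy : ∀ᵐ q ∂μ, q.2 ∈ Set.Icc (0 : ℝ) 1)
    (hz : AEStronglyMeasurable (fun q => z q.1) μ) (hu : Integrable (fun q => u q.1) μ)
    (hu' : Integrable (fun q => u' q.1) μ) :
    bceDeriv μ z (fun x => u x - u' x) = bceDeriv μ z u - bceDeriv μ z u' := by
  simp only [bceDeriv, mul_sub]
  exact integral_sub (integrable_sigmoid_sub_mul hy hz hu) (integrable_sigmoid_sub_mul hy hz hu')

lemma bceDeriv_sum_mul (hy : ∀ᵐ q ∂μ, q.2 ∈ Set.Icc (0 : ℝ) 1)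
    (hz : AEStronglyMeasurable (fun q => z q.1) μ) (hX : ∀ l, Integrable (fun q => q.1 l) μ)
    (c : Fin d → ℝ) :
    bceDeriv μ z (fun x => ∑ l, c l * x l) = ∑ l, c l * bceDeriv μ z (fun x => x l) := by
  have hsum : (fun q : (Fin d → ℝ) × ℝ => (sigmoid (z q.1) - q.2) * ∑ l, c l * q.1 l)
      = fun q => ∑ l, c l * ((sigmoid (z q.1) - q.2) * q.1 l) := by
    funext q
    rw [mul_sum]
    exact sum_congr rfl fun l _ => by ring
  simp only [bceDeriv, hsum, integral_finsetSum _
    (fun l _ => (integrable_sigmoid_sub_mul (u := fun x => x l) hy hz (hX l)).const_mul (c l)),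
    integral_const_mul]

lemma bceLossFn_add_mul_le [IsFiniteMeasure μ] (hy : ∀ᵐ q ∂μ, q.2 ∈ Set.Icc (0 : ℝ) 1)
    (hz : Integrable (fun q => z q.1) μ) (hu : MemLp (fun q => u q.1) 2 μ) (t : ℝ) :
    bceLossFn μ (fun x => z x + t * u x)
      ≤ bceLossFn μ z + t * bceDeriv μ z u + t ^ 2 * (∫ q, u q.1 ^ 2 ∂μ) / 8 := by
  have hu1 := hu.integrable one_le_two
  have hL := integrable_softplus_sub_mul hy hz
  have hR := (integrable_sigmoid_sub_mul hy hz.1 hu1).const_mul t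
  have hQ := (hu.integrable_sq.const_mul (t ^ 2)).div_const 8
  have h := integral_mono (integrable_softplus_sub_mul (z := fun x => z x + t * u x) hy
    (hz.fun_add (hu1.const_mul t))) ((hL.fun_add hR).fun_add hQ) fun q => by
      have := softplus_le_add_sigmoid_mul_sub_add_sq (z q.1) (z q.1 + t * u q.1)
      linarith
  rwa [integral_add (hL.fun_add hR) hQ, integral_add hL hR, integral_const_mul, integral_div,
    integral_const_mul] at h

lemma bceDeriv_eq_zero_of_forall_le [IsFiniteMeasure μ] (hy : ∀ᵐ q ∂μ, q.2 ∈ Set.Icc (0 : ℝ) 1)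
    (hz : Integrable (fun q => z q.1) μ) (hu : MemLp (fun q => u q.1) 2 μ)
    (hmin : ∀ t : ℝ, bceLossFn μ z ≤ bceLossFn μ (fun x => z x + t * u x)) :
    bceDeriv μ z u = 0 := by
  have hquad : ∀ t : ℝ, 0 ≤ (∫ q, u q.1 ^ 2 ∂μ) / 8 * (t * t) + bceDeriv μ z u * t + 0 :=
    fun t => by nlinarith [hmin t, bceLossFn_add_mul_le hy hz hu t]
  have h := discrim_le_zero hquad
  rw [discrim] at h
  nlinarith [sq_nonneg (bceDeriv μ z u)]

lemma bceLossFn_sub_le_bceDeriv [IsFiniteMeasure μ] (hy : ∀ᵐ q ∂μ, q.2 ∈ Set.Icc (0 : ℝ) 1)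
    (hz : Integrable (fun q => z q.1) μ) (hz' : Integrable (fun q => z' q.1) μ) :
    bceLossFn μ z - bceLossFn μ z' ≤ bceDeriv μ z (fun x => z x - z' x) := by
  rw [bceLossFn_eq_integral_softplus, bceLossFn_eq_integral_softplus,
    ← integral_sub (integrable_softplus_sub_mul hy hz) (integrable_softplus_sub_mul hy hz')]
  refine integral_mono
    ((integrable_softplus_sub_mul hy hz).sub' (integrable_softplus_sub_mul hy hz'))
    (integrable_sigmoid_sub_mul (u := fun x => z x - z' x) hy hz.1 (hz.sub' hz')) fun q => ?_
  have := softplus_add_sigmoid_mul_sub_le (z q.1) (z' q.1)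
  linarith

lemma two_mul_integral_sigmoid_sub_sq_le [IsFiniteMeasure μ]
    (hy : ∀ᵐ q ∂μ, q.2 ∈ Set.Icc (0 : ℝ) 1)
    (hz : Integrable (fun q => z q.1) μ) (hz' : Integrable (fun q => z' q.1) μ) :
    2 * ∫ q, (sigmoid (z q.1) - sigmoid (z' q.1)) ^ 2 ∂μ
      ≤ bceLossFn μ z - bceLossFn μ z' - bceDeriv μ z' (fun x => z x - z' x) := by
  have hL := integrable_softplus_sub_mul hy hz
  have hL' := integrable_softplus_sub_mul hy hz'
  have hR := integrable_sigmoid_sub_mul (u := fun x => z x - z' x) hy hz'.1 (hz.sub' hz')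
  have h := integral_mono ((memLp_sigmoid_sub_sigmoid hz.1 hz'.1).integrable_sq.const_mul 2)
    ((hL.sub' hL').sub' hR) fun q => by
      have := two_mul_sigmoid_sub_sq_le (z q.1) (z' q.1)
      linarith
  rwa [integral_const_mul, integral_sub (hL.sub' hL') hR, integral_sub hL hL'] at h

lemma abs_bceDeriv_sub_bceDeriv_le [IsFiniteMeasure μ] (hy : ∀ᵐ q ∂μ, q.2 ∈ Set.Icc (0 : ℝ) 1)
    (hz : AEStronglyMeasurable (fun q => z q.1) μ) (hz' : AEStronglyMeasurable (fun q => z' q.1) μ)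
    (hu : MemLp (fun q => u q.1) 2 μ) :
    |bceDeriv μ z u - bceDeriv μ z' u|
      ≤ √(∫ q, (sigmoid (z q.1) - sigmoid (z' q.1)) ^ 2 ∂μ) * √(∫ q, u q.1 ^ 2 ∂μ) := by
  have hu1 := hu.integrable one_le_two
  rw [bceDeriv, bceDeriv, ← integral_sub (integrable_sigmoid_sub_mul hy hz hu1)
    (integrable_sigmoid_sub_mul hy hz' hu1)]
  simp only [← sub_mul, sub_sub_sub_cancel_right]
  exact abs_integral_mul_le_sqrt_mul_sqrt (memLp_sigmoid_sub_sigmoid hz hz') hu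

end Loss

lemma abs_sum_mul_le_sum_abs_mul {ι : Type*} (s : Finset ι) (a b : ι → ℝ) {M : ℝ}
    (hb : ∀ i ∈ s, |b i| ≤ M) : |∑ i ∈ s, a i * b i| ≤ (∑ i ∈ s, |a i|) * M := by
  calc |∑ i ∈ s, a i * b i| ≤ ∑ i ∈ s, |a i| * |b i| := by
        simpa only [abs_mul] using abs_sum_le_sum_abs (fun i => a i * b i) s
    _ ≤ ∑ i ∈ s, |a i| * M := sum_le_sum fun i hi =>
        mul_le_mul_of_nonneg_left (hb i hi) (abs_nonneg _)
    _ = (∑ i ∈ s, |a i|) * M := (sum_mul ..).symm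

lemma sum_Ico_sqrt_half_sub_le {L : ℕ → ℝ} {k i : ℕ} {ε : ℝ} (hL : ∀ j < k, L (j + 1) ≤ L j)
    (hε : L 1 - L k ≤ ε) (hi : i < k) :
    ∑ j ∈ Ico (i + 1) k, √((L j - L (j + 1)) / 2) ≤ √(k * ε / 2) := by
  have hnn : ∀ j ∈ Ico 1 k, 0 ≤ (L j - L (j + 1)) / 2 := fun j hj => by
    linarith [hL j (mem_Ico.1 hj).2]
  have hsub : Ico (i + 1) k ⊆ Ico 1 k := Ico_subset_Ico (by omega) le_rfl
  have hsum : ∑ j ∈ Ico (i + 1) k, (L j - L (j + 1)) / 2 ≤ ε / 2 :=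
    calc ∑ j ∈ Ico (i + 1) k, (L j - L (j + 1)) / 2
        ≤ ∑ j ∈ Ico 1 k, (L j - L (j + 1)) / 2 :=
          sum_le_sum_of_subset_of_nonneg hsub fun j hj _ => hnn j hj
      _ = (L 1 - L k) / 2 := by
          rw [← sum_div, ← neg_sub (L k), ← sum_Ico_sub L (by omega : 1 ≤ k),
            ← sum_neg_distrib]
          simp only [neg_sub]
      _ ≤ ε / 2 := by linarith
  calc ∑ j ∈ Ico (i + 1) k, √((L j - L (j + 1)) / 2)
      = ∑ j ∈ Ico (i + 1) k, 1 * √((L j - L (j + 1)) / 2) := by simp only [one_mul]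
    _ ≤ √(∑ j ∈ Ico (i + 1) k, 1 ^ 2)
          * √(∑ j ∈ Ico (i + 1) k, √((L j - L (j + 1)) / 2) ^ 2) :=
        Real.sum_mul_le_sqrt_mul_sqrt _ _ _
    _ = √((Ico (i + 1) k).card) * √(∑ j ∈ Ico (i + 1) k, (L j - L (j + 1)) / 2) := by
        rw [sum_congr rfl fun j hj => Real.sq_sqrt (hnn j (hsub hj))]
        simp
    _ ≤ √k * √(ε / 2) := by
        gcongr
        simp
    _ = √(k * ε / 2) := by rw [← Real.sqrt_mul (Nat.cast_nonneg k), mul_div_assoc]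

section Protocol

variable {d : ℕ} {μ : Measure ((Fin d → ℝ) × ℝ)} (w : ℕ → Fin d → ℝ) (v : ℕ → ℝ)

lemma exists_seqLogit_eq_sum (i : ℕ) :
    ∃ c : Fin d → ℝ, seqLogit w v i = fun x => ∑ l, c l * x l := by
  induction i with
  | zero => exact ⟨0, by funext x; simp [seqLogit]⟩
  | succ i ih =>
    obtain ⟨c, hc⟩ := ih
    refine ⟨w i + v i • c, funext fun x => ?_⟩
    simp only [seqLogit, hc, Pi.add_apply, Pi.smul_apply, smul_eq_mul, add_mul,
      sum_add_distrib, mul_sum, mul_assoc]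

lemma memLp_sum_mul (hX : ∀ l, MemLp (fun q : (Fin d → ℝ) × ℝ => q.1 l) 2 μ) (c : Fin d → ℝ) :
    MemLp (fun q : (Fin d → ℝ) × ℝ => ∑ l, c l * q.1 l) 2 μ :=
  memLp_finsetSum _ fun l _ => (hX l).const_mul (c l)

lemma memLp_seqLogit (hX : ∀ l, MemLp (fun q : (Fin d → ℝ) × ℝ => q.1 l) 2 μ) (i : ℕ) :
    MemLp (fun q : (Fin d → ℝ) × ℝ => seqLogit w v i q.1) 2 μ := by
  obtain ⟨c, hc⟩ := exists_seqLogit_eq_sum w v i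
  rw [hc]
  exact memLp_sum_mul hX c

def IsStepMinimizer (μ : Measure ((Fin d → ℝ) × ℝ)) (w : ℕ → Fin d → ℝ) (v : ℕ → ℝ)
    (S : Finset (Fin d)) (i : ℕ) : Prop :=
  ∀ w' : Fin d → ℝ, (∀ l ∉ S, w' l = 0) → ∀ v' : ℝ,
    bceLossFn μ (seqLogit w v (i + 1))
      ≤ bceLossFn μ (fun x => (∑ l, w' l * x l) + v' * seqLogit w v i x)

variable {S : Finset (Fin d)} {i : ℕ}

lemma bceLossFn_seqLogit_succ_le (hmin : IsStepMinimizer μ w v S i) :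
    bceLossFn μ (seqLogit w v (i + 1)) ≤ bceLossFn μ (seqLogit w v i) := by
  simpa using hmin 0 (fun _ _ => rfl) 1

variable [IsFiniteMeasure μ]

lemma bceDeriv_seqLogit_succ_eq_zero (hy : ∀ᵐ q ∂μ, q.2 ∈ Set.Icc (0 : ℝ) 1)
    (hX : ∀ l, MemLp (fun q : (Fin d → ℝ) × ℝ => q.1 l) 2 μ) (hsupp : ∀ l ∉ S, w i l = 0)
    (hmin : IsStepMinimizer μ w v S i)
    {c : Fin d → ℝ} (hc : ∀ l ∉ S, c l = 0) (ρ : ℝ) :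
    bceDeriv μ (seqLogit w v (i + 1)) (fun x => (∑ l, c l * x l) + ρ * seqLogit w v i x) = 0 := by
  refine bceDeriv_eq_zero_of_forall_le hy ((memLp_seqLogit w v hX _).integrable one_le_two)
    ((memLp_sum_mul hX c).add ((memLp_seqLogit w v hX i).const_mul ρ)) fun t => ?_
  convert hmin (w i + t • c) (fun l hl => by simp [hsupp l hl, hc l hl]) (v i + t * ρ) using 2
  funext x
  simp only [seqLogit, Pi.add_apply, Pi.smul_apply, smul_eq_mul, add_mul, mul_assoc,
    sum_add_distrib, ← mul_sum]
  ring

lemma integral_sigmoid_seqLogit_sub_sq_le (hy : ∀ᵐ q ∂μ, q.2 ∈ Set.Icc (0 : ℝ) 1)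
    (hX : ∀ l, MemLp (fun q : (Fin d → ℝ) × ℝ => q.1 l) 2 μ) (hsupp : ∀ l ∉ S, w i l = 0)
    (hmin : IsStepMinimizer μ w v S i) :
    ∫ q, (sigmoid (seqLogit w v i q.1) - sigmoid (seqLogit w v (i + 1) q.1)) ^ 2 ∂μ
      ≤ (bceLossFn μ (seqLogit w v i) - bceLossFn μ (seqLogit w v (i + 1))) / 2 := by
  have hstat : bceDeriv μ (seqLogit w v (i + 1))
      (fun x => seqLogit w v i x - seqLogit w v (i + 1) x) = 0 := by
    convert bceDeriv_seqLogit_succ_eq_zero w v hy hX hsupp hmin (c := -w i)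
      (fun l hl => by simp [hsupp l hl]) (1 - v i) using 2
    funext x
    simp only [seqLogit, Pi.neg_apply, neg_mul, sum_neg_distrib]
    ring
  have h := two_mul_integral_sigmoid_sub_sq_le hy
    ((memLp_seqLogit w v hX i).integrable one_le_two)
    ((memLp_seqLogit w v hX (i + 1)).integrable one_le_two)
  linarith

lemma abs_bceDeriv_seqLogit_sub_succ_le (hy : ∀ᵐ q ∂μ, q.2 ∈ Set.Icc (0 : ℝ) 1)
    (hX : ∀ l, MemLp (fun q : (Fin d → ℝ) × ℝ => q.1 l) 2 μ) (hsupp : ∀ l ∉ S, w i l = 0)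
    (hmin : IsStepMinimizer μ w v S i)
    {u : (Fin d → ℝ) → ℝ} (hu : MemLp (fun q => u q.1) 2 μ) :
    |bceDeriv μ (seqLogit w v i) u - bceDeriv μ (seqLogit w v (i + 1)) u|
      ≤ √((bceLossFn μ (seqLogit w v i) - bceLossFn μ (seqLogit w v (i + 1))) / 2)
        * √(∫ q, u q.1 ^ 2 ∂μ) :=
  (abs_bceDeriv_sub_bceDeriv_le hy (memLp_seqLogit w v hX i).1
    (memLp_seqLogit w v hX (i + 1)).1 hu).trans <| by
      gcongr
      exact integral_sigmoid_seqLogit_sub_sq_le w v hy hX hsupp hmin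

end Protocol

section Path

variable {d : ℕ} {μ : Measure ((Fin d → ℝ) × ℝ)} [IsFiniteMeasure μ] (w : ℕ → Fin d → ℝ)
  (v : ℕ → ℝ) {k : ℕ} {S : ℕ → Finset (Fin d)}

lemma bceDeriv_seqLogit_self_eq_zero (hy : ∀ᵐ q ∂μ, q.2 ∈ Set.Icc (0 : ℝ) 1)
    (hX : ∀ l, MemLp (fun q : (Fin d → ℝ) × ℝ => q.1 l) 2 μ)
    (hsupp : ∀ i < k, ∀ l ∉ S i, w i l = 0)
    (hmin : ∀ i < k, IsStepMinimizer μ w v (S i) i) :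
    bceDeriv μ (seqLogit w v k) (seqLogit w v k) = 0 := by
  cases k with
  | zero => simp [bceDeriv, seqLogit]
  | succ i =>
    exact bceDeriv_seqLogit_succ_eq_zero w v hy hX (hsupp i i.lt_succ_self)
      (hmin i i.lt_succ_self) (hsupp i i.lt_succ_self) (v i)

lemma abs_bceDeriv_seqLogit_coord_le (hy : ∀ᵐ q ∂μ, q.2 ∈ Set.Icc (0 : ℝ) 1)
    (hX : ∀ l, MemLp (fun q : (Fin d → ℝ) × ℝ => q.1 l) 2 μ) {BX : ℝ} (hBX : 0 ≤ BX)
    {l : Fin d} (hXl : ∫ q, (q.1 l) ^ 2 ∂μ ≤ BX ^ 2)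
    (hsupp : ∀ i < k, ∀ l ∉ S i, w i l = 0)
    (hmin : ∀ i < k, IsStepMinimizer μ w v (S i) i)
    {ε : ℝ} (hε : bceLossFn μ (seqLogit w v 1) - bceLossFn μ (seqLogit w v k) ≤ ε)
    {i : ℕ} (hi : i < k) (hl : l ∈ S i) :
    |bceDeriv μ (seqLogit w v k) (fun x => x l)| ≤ BX * √(k * ε / 2) := by
  set D : ℕ → ℝ := fun j => bceDeriv μ (seqLogit w v j) (fun x => x l)
  set L : ℕ → ℝ := fun j => bceLossFn μ (seqLogit w v j)
  have hcovered : D (i + 1) = 0 := by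
    have h := bceDeriv_seqLogit_succ_eq_zero w v hy hX (hsupp i hi) (hmin i hi)
      (c := Pi.single l 1)
      (fun l' hl' => Pi.single_eq_of_ne (ne_of_mem_of_not_mem hl hl').symm 1) 0
    simpa [D, Pi.single_apply] using h
  have hstep : ∀ j < k, |D j - D (j + 1)| ≤ √((L j - L (j + 1)) / 2) * BX := fun j hj =>
    (abs_bceDeriv_seqLogit_sub_succ_le w v hy hX (hsupp j hj) (hmin j hj) (hX l)).trans <| by
      gcongr
      exact Real.sqrt_le_left hBX |>.mpr hXl
  calc |D k| = |∑ j ∈ Ico (i + 1) k, (D (j + 1) - D j)| := by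
        rw [sum_Ico_sub D hi, hcovered, sub_zero]
    _ ≤ ∑ j ∈ Ico (i + 1) k, |D j - D (j + 1)| :=
        (abs_sum_le_sum_abs _ _).trans_eq
          (sum_congr rfl fun _ _ => abs_sub_comm _ _)
    _ ≤ ∑ j ∈ Ico (i + 1) k, √((L j - L (j + 1)) / 2) * BX :=
        sum_le_sum fun j hj => hstep j (mem_Ico.1 hj).2
    _ = BX * ∑ j ∈ Ico (i + 1) k, √((L j - L (j + 1)) / 2) := by
        rw [← sum_mul, mul_comm]
    _ ≤ BX * √(k * ε / 2) := by
        gcongr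
        exact sum_Ico_sqrt_half_sub_le
          (fun j hj => bceLossFn_seqLogit_succ_le w v (hmin j hj)) hε hi

end Path

theorem loss_bound_via_path_coverage_general
    {d : ℕ} (μ : Measure ((Fin d → ℝ) × ℝ)) [IsProbabilityMeasure μ]
    (hy : ∀ᵐ q ∂μ, q.2 = 0 ∨ q.2 = 1)
    (BX : ℝ) (hBX : 0 ≤ BX)
    (hX2int : ∀ l : Fin d, Integrable (fun q : (Fin d → ℝ) × ℝ => (q.1 l) ^ 2) μ)
    (hX2 : ∀ l : Fin d, ∫ q, (q.1 l) ^ 2 ∂μ ≤ BX ^ 2)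
    (k : ℕ) (S : ℕ → Finset (Fin d))
    (hcov : ∀ l : Fin d, ∃ i < k, l ∈ S i)
    (w : ℕ → Fin d → ℝ) (v : ℕ → ℝ)
    (hsupp : ∀ i < k, ∀ l ∉ S i, w i l = 0)
    (hmin : ∀ i < k, ∀ w' : Fin d → ℝ, (∀ l ∉ S i, w' l = 0) → ∀ v' : ℝ,
      bceLossFn μ (seqLogit w v (i + 1))
        ≤ bceLossFn μ (fun x => (∑ l, w' l * x l) + v' * seqLogit w v i x))
    (Bg : ℝ) (α : Fin d → ℝ) (hα : ∑ l, |α l| ≤ Bg)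
    (ε : ℝ) (hε : bceLossFn μ (seqLogit w v 1) - bceLossFn μ (seqLogit w v k) ≤ ε) :
    bceLossFn μ (seqLogit w v k)
      ≤ bceLossFn μ (fun x => ∑ l, α l * x l) + Bg * BX * Real.sqrt (k * ε / 2) := by
  have hy' : ∀ᵐ q ∂μ, q.2 ∈ Set.Icc (0 : ℝ) 1 :=
    hy.mono fun q hq => by rcases hq with h | h <;> simp [h]
  have hX : ∀ l, MemLp (fun q : (Fin d → ℝ) × ℝ => q.1 l) 2 μ := fun l =>
    (memLp_two_iff_integrable_sq (by fun_prop)).2 (hX2int l)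
  have hzk := (memLp_seqLogit w v hX k).integrable one_le_two
  have hg := (memLp_sum_mul hX α).integrable one_le_two
  have hgrad : ∀ l, |bceDeriv μ (seqLogit w v k) (fun x => x l)| ≤ BX * √(k * ε / 2) := fun l =>
    let ⟨_, hi, hl⟩ := hcov l
    abs_bceDeriv_seqLogit_coord_le w v hy' hX hBX (hX2 l) hsupp hmin hε hi hl
  have hconv := bceLossFn_sub_le_bceDeriv (z' := fun x => ∑ l, α l * x l) hy' hzk hg
  rw [bceDeriv_sub (u' := fun x => ∑ l, α l * x l) hy' hzk.1 hzk hg,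
    bceDeriv_seqLogit_self_eq_zero w v hy' hX hsupp hmin,
    bceDeriv_sum_mul hy' hzk.1 fun l => (hX l).integrable one_le_two] at hconv
  have hsum := abs_sum_mul_le_sum_abs_mul univ α _ fun l _ => hgrad l
  have hBg := mul_le_mul_of_nonneg_right hα (by positivity : 0 ≤ BX * √(k * ε / 2))
  linarith [neg_abs_le (∑ l, α l * bceDeriv μ (seqLogit w v k) (fun x => x l))]

/-- For the sequential logit-passing protocol on feature subsets `S_1, …, S_k` covering all
`d` features, any logistic predictor `g = σ∘z_g` with `z_g(x) = Σ_l α_l x_l`,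
`Σ_l |α_l| ≤ B_g`, second moments `E[x_l²] ≤ B_X²`, and `ε ≥ L(p_1) − L(p_k)`:
`L(p_k) ≤ L(g) + B_g B_X √(kε/2)`. -/
theorem loss_bound_via_path_coverage
    {d : ℕ} (μ : Measure ((Fin d → ℝ) × ℝ)) [IsProbabilityMeasure μ]
    (hy : ∀ᵐ q ∂μ, q.2 = 0 ∨ q.2 = 1)
    (BX : ℝ) (hBX : 0 ≤ BX)
    (hX2int : ∀ l : Fin d, Integrable (fun q : (Fin d → ℝ) × ℝ => (q.1 l) ^ 2) μ)
    (hX2 : ∀ l : Fin d, ∫ q, (q.1 l) ^ 2 ∂μ ≤ BX ^ 2)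
    (k : ℕ) (hk : 1 ≤ k) (S : ℕ → Finset (Fin d))
    (hcov : ∀ l : Fin d, ∃ i < k, l ∈ S i)
    (w : ℕ → Fin d → ℝ) (v : ℕ → ℝ)
    (hsupp : ∀ i < k, ∀ l ∉ S i, w i l = 0)
    (hmin : ∀ i < k, ∀ w' : Fin d → ℝ, (∀ l ∉ S i, w' l = 0) → ∀ v' : ℝ,
      bceLossFn μ (seqLogit w v (i + 1))
        ≤ bceLossFn μ (fun x => (∑ l, w' l * x l) + v' * seqLogit w v i x))
    (Bg : ℝ) (α : Fin d → ℝ) (hα : ∑ l, |α l| ≤ Bg)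
    (ε : ℝ) (hε : bceLossFn μ (seqLogit w v 1) - bceLossFn μ (seqLogit w v k) ≤ ε) :
    bceLossFn μ (seqLogit w v k)
      ≤ bceLossFn μ (fun x => ∑ l, α l * x l) + Bg * BX * Real.sqrt (k * ε / 2) :=
  loss_bound_via_path_coverage_general μ hy BX hBX hX2int hX2 k S hcov w v hsupp hmin Bg α hα ε hε
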